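/- The three-qubit AND state ψ_AND is logically but not strongly contextual for the measurements Y and Z at each party: (1) the constant global assignment g with g i m = false for all i, m is consistent (for every context the induced all-false outcome has nonzero amplitude); and (2) the outcome (false, true, true) is possible in the context (Y, Y, Z) (it has nonzero amplitude) but no consistent global assignment g satisfies g 0 Y = false, g 1 Y = true, g 2 Z = true. -/
import Mathlib


noncomputable section

/-- Inner product of two `n`-qubit states `(Fin n → Bool) → ℂ`. -/
def inner' {n : ℕ} (φ ψ : (Fin n → Bool) → ℂ) : ℂ :=
  ∑ s : Fin n → Bool, (starRingEnd ℂ) (φ s) * ψ s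

/-- Tensor product of local vectors. -/
def tensor {n : ℕ} (v : Fin n → Bool → ℂ) : (Fin n → Bool) → ℂ :=
  fun s => ∏ i, v i (s i)

/-- `Y`-measurement eigenvectors: `yvec false = (1/√2, i/√2)`,
`yvec true = (1/√2, -i/√2)`. -/
def yvec (b : Bool) : Bool → ℂ :=
  fun b' => if b' then (if b then -Complex.I else Complex.I) * (Real.sqrt 2 : ℂ)⁻¹
    else (Real.sqrt 2 : ℂ)⁻¹

/-- `Z`-measurement eigenvectors. -/
def evec (b : Bool) : Bool → ℂ := fun b' => if b = b' then 1 else 0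

/-- The measurement set: `Y` or `Z` at each site. -/
inductive M | Y | Z

/-- The eigenvector family of each measurement. -/
def mvec : M → Bool → Bool → ℂ
  | M.Y => yvec
  | M.Z => evec

/-- The amplitude of outcome `o` in context `c` for a 3-qubit state `ψ`. -/
def amp (ψ : (Fin 3 → Bool) → ℂ) (c : Fin 3 → M) (o : Fin 3 → Bool) : ℂ :=
  inner' (tensor fun i => mvec (c i) (o i)) ψ

/-- A global assignment is consistent if its induced outcome is possible in
every context. -/
def consistent (ψ : (Fin 3 → Bool) → ℂ) (g : Fin 3 → M → Bool) : Prop :=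
  ∀ c : Fin 3 → M, amp ψ c (fun i => g i (c i)) ≠ 0

/-- The three-qubit AND state. -/
def psiAND : (Fin 3 → Bool) → ℂ :=
  fun s => if s 2 = (s 0 && s 1) then (1/2 : ℂ) else 0

/-- Auxiliary equivalence between 3-bit functions and triples of booleans. -/
def eqv : (Fin 3 → Bool) ≃ Bool × Bool × Bool where
  toFun s := (s 0, s 1, s 2)
  invFun p := ![p.1, p.2.1, p.2.2]
  left_inv s := by funext i; fin_cases i <;> rfl
  right_inv p := rfl

lemma sum_bool3 (f : (Fin 3 → Bool) → ℂ) :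
    ∑ s, f s = ∑ p : Bool × Bool × Bool, f ![p.1, p.2.1, p.2.2] :=
  (Equiv.sum_comp eqv.symm f).symm

lemma amp_eval (ψ : (Fin 3 → Bool) → ℂ) (c : Fin 3 → M) (o : Fin 3 → Bool) :
    amp ψ c o = ∑ p : Bool × Bool × Bool,
      (starRingEnd ℂ) (mvec (c 0) (o 0) p.1 * mvec (c 1) (o 1) p.2.1 *
        mvec (c 2) (o 2) p.2.2) * ψ ![p.1, p.2.1, p.2.2] := by
  rw [amp, inner', sum_bool3]
  refine Finset.sum_congr rfl fun p _ => ?_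
  simp [tensor, Fin.prod_univ_three]

/-- The AND state is logically but not strongly contextual for `Y`/`Z`
measurements: the constant-`false` global assignment is consistent, and the
outcome `(false, true, true)` is possible in the `(Y,Y,Z)` context but extended
by no consistent global assignment. -/
theorem and_logically_not_strongly_contextual :
    consistent psiAND (fun _ _ => false) ∧
    amp psiAND ![M.Y, M.Y, M.Z] ![false, true, true] ≠ 0 ∧
    ∀ g : Fin 3 → M → Bool, consistent psiAND g →
      ¬ (g 0 M.Y = false ∧ g 1 M.Y = true ∧ g 2 M.Z = true) := by
  refine ⟨?_, ?_, ?_⟩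
  · intro c
    rw [amp_eval]
    have h2 : (Real.sqrt 2 : ℂ) ≠ 0 := by
      simp [Complex.ofReal_ne_zero, Real.sqrt_ne_zero']
    cases h0 : c 0 <;> cases h1 : c 1 <;> cases h2' : c 2 <;>
      simp [Fintype.sum_prod_type, psiAND, mvec, yvec, evec] <;>
      (intro h; field_simp [h2] at h) <;>
      simp [Complex.ext_iff] at h
  · rw [amp_eval]
    simp [Fintype.sum_prod_type, psiAND, mvec, yvec, evec]
  · rintro g hg ⟨h0, h1, h2⟩
    by_cases hz0 : g 0 M.Z
    · by_cases hz1 : g 1 M.Z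
      · by_cases hy2 : g 2 M.Y
        · have := hg ![M.Z, M.Y, M.Y]
          rw [amp_eval] at this
          apply this
          simp [Fintype.sum_prod_type, psiAND, mvec, yvec, evec, h1, hz0, hy2]
          ring_nf
          simp [Complex.I_sq]
        · have := hg ![M.Y, M.Z, M.Y]
          rw [amp_eval] at this
          apply this
          simp only [Bool.not_eq_true] at hy2
          simp [Fintype.sum_prod_type, psiAND, mvec, yvec, evec, h0, hz1, hy2]
          ring_nf
          simp [Complex.I_sq]
      · have := hg ![M.Z, M.Z, M.Z]
        rw [amp_eval] at this
        apply this
        simp only [Bool.not_eq_true] at hz1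
        simp [Fintype.sum_prod_type, psiAND, mvec, yvec, evec, hz0, hz1, h2]
    · have := hg ![M.Z, M.Z, M.Z]
      rw [amp_eval] at this
      apply this
      simp only [Bool.not_eq_true] at hz0
      simp [Fintype.sum_prod_type, psiAND, mvec, yvec, evec, hz0, h2]
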